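/- arXiv:2103.06494 — 3 statements merged into one kernel-verified Lean document; each statement's English description precedes it below -/
import Mathlib

section
/- Let f : ℝ² → ℝ, f(x) = x₁⁴ + x₂⁴, constraint h(x) = x₁ + x₂ = 0, and penalty function f^ε(x) = x₁⁴ + x₂⁴ − (2x₁³ + 2x₂³)(x₁ + x₂) + (1/ε)(x₁ + x₂)². Then at any point x with x₁ = 0 and x₂ ≠ 0, the determinant of the Hessian of f^ε equals −36 x₂⁴ < 0, independent of ε. Hence f^ε is not convex on any open set containing a point (0, x₂) with x₂ ≠ 0, for any ε > 0. -/
open Filter Topology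

/-!
At `x = (0, t)` the Hessian of `f^ε` is `[[w, w - 6t²], [w - 6t², w - 12t²]]` with `w = 2/ε`,
whose determinant is `-36 t⁴` whatever `w` is. Along `v = (c - 1, 1)` its quadratic form is
`2c²/ε - 12ct²`, negative for `c = 3εt²`; since `f^ε` is a polynomial, the second difference
`f^ε(x + δv) + f^ε(x - δv) - 2 f^ε(x)` is then negative for small `δ ≠ 0`, whereas convexity on
a neighbourhood of `x` would make it nonnegative.
-/

theorem ConvexOn.two_mul_le_add_sub {E : Type*} [AddCommGroup E] [Module ℝ E] {s : Set E}
    {f : E → ℝ} (hf : ConvexOn ℝ s f) {x v : E} (hp : x + v ∈ s) (hm : x - v ∈ s) :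
    2 * f x ≤ f (x + v) + f (x - v) := by
  have hmid : (1 / 2 : ℝ) • (x + v) + (1 / 2 : ℝ) • (x - v) = x := by module
  have := hf.2 hp hm (by norm_num : (0 : ℝ) ≤ 1 / 2) (by norm_num : (0 : ℝ) ≤ 1 / 2) (by norm_num)
  rw [hmid, smul_eq_mul, smul_eq_mul] at this
  linarith

theorem ConvexOn.eventually_two_mul_le_add_sub {E : Type*} [AddCommGroup E] [Module ℝ E]
    [TopologicalSpace E] [IsTopologicalAddGroup E] [ContinuousSMul ℝ E] {s : Set E}
    {f : E → ℝ} (hf : ConvexOn ℝ s f) {x : E} (hs : s ∈ 𝓝 x) (v : E) :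
    ∀ᶠ δ : ℝ in 𝓝 0, 2 * f x ≤ f (x + δ • v) + f (x - δ • v) := by
  have hδv : Tendsto (fun δ : ℝ => δ • v) (𝓝 0) (𝓝 0) := by
    simpa using (tendsto_id (x := 𝓝 (0 : ℝ))).smul_const v
  have hp : Tendsto (fun δ : ℝ => x + δ • v) (𝓝 0) (𝓝 x) := by
    simpa using tendsto_const_nhds.add hδv
  have hm : Tendsto (fun δ : ℝ => x - δ • v) (𝓝 0) (𝓝 x) := by
    simpa using tendsto_const_nhds.sub hδv
  filter_upwards [hp hs, hm hs] with δ hδp hδm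
  exact hf.two_mul_le_add_sub hδp hδm

theorem eventually_sq_mul_add_pow_four_mul_neg {Q : ℝ} (hQ : Q < 0) (B : ℝ) :
    ∀ᶠ δ : ℝ in 𝓝[≠] 0, δ ^ 2 * Q + δ ^ 4 * B < 0 := by
  have hlim : Tendsto (fun δ : ℝ => Q + δ ^ 2 * B) (𝓝 0) (𝓝 Q) := by
    simpa using ((continuous_pow 2).mul continuous_const).const_add Q |>.tendsto (0 : ℝ)
  have hsq : ∀ᶠ δ : ℝ in 𝓝[≠] 0, 0 < δ ^ 2 :=
    eventually_nhdsWithin_of_forall fun _ hδ => sq_pos_of_ne_zero hδ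
  have hneg : ∀ᶠ δ : ℝ in 𝓝 0, Q + δ ^ 2 * B < 0 := hlim.eventually (gt_mem_nhds hQ)
  filter_upwards [eventually_nhdsWithin_of_eventually_nhds hneg, hsq] with δ hneg hpos
  have : δ ^ 2 * Q + δ ^ 4 * B = δ ^ 2 * (Q + δ ^ 2 * B) := by ring
  exact this ▸ mul_neg_of_pos_of_neg hpos hneg

noncomputable def penalty (ε : ℝ) (x : Fin 2 → ℝ) : ℝ :=
  x 0 ^ 4 + x 1 ^ 4 - (2 * x 0 ^ 3 + 2 * x 1 ^ 3) * (x 0 + x 1) + 1 / ε * (x 0 + x 1) ^ 2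

theorem penalty_add_sub_sub_two_mul (ε t c δ : ℝ) :
    penalty ε (![0, t] + δ • ![c - 1, 1]) + penalty ε (![0, t] - δ • ![c - 1, 1])
        - 2 * penalty ε ![0, t] =
      δ ^ 2 * (2 * c * (c / ε - 6 * t ^ 2))
        + δ ^ 4 * (4 * (c - 1) ^ 2 + 4 * (c - 1) * c ^ 2 - 2 * c ^ 4) := by
  simp only [penalty, Pi.add_apply, Pi.sub_apply, Pi.smul_apply, smul_eq_mul,
    Matrix.cons_val_zero, Matrix.cons_val_one]
  ring

theorem not_convexOn_penalty {ε : ℝ} (hε : 0 < ε) {t : ℝ} (ht : t ≠ 0) {s : Set (Fin 2 → ℝ)}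
    (hs : s ∈ 𝓝 ![0, t]) : ¬ ConvexOn ℝ s (penalty ε) := by
  intro hconv
  set c := 3 * ε * t ^ 2
  have hQ : 2 * c * (c / ε - 6 * t ^ 2) < 0 := by
    have : 2 * c * (c / ε - 6 * t ^ 2) = -18 * ε * t ^ 4 := by
      simp only [c]; field_simp; ring
    rw [this]
    have : 0 < ε * t ^ 4 := by positivity
    linarith
  have hconvex := hconv.eventually_two_mul_le_add_sub hs ![c - 1, 1]
  have hneg := eventually_sq_mul_add_pow_four_mul_neg hQ
    (4 * (c - 1) ^ 2 + 4 * (c - 1) * c ^ 2 - 2 * c ^ 4)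
  obtain ⟨δ, hle, hlt⟩ := ((eventually_nhdsWithin_of_eventually_nhds hconvex).and hneg).exists
  linarith [penalty_add_sub_sub_two_mul ε t c δ]

/-- For `f(x) = x₁⁴ + x₂⁴` with constraint `x₁ + x₂ = 0`, the penalty function
`f^ε(x) = x₁⁴ + x₂⁴ − (2x₁³ + 2x₂³)(x₁ + x₂) + (1/ε)(x₁ + x₂)²` has, at any point with
`x₁ = 0`, `x₂ ≠ 0`, a Hessian with determinant `−36 x₂⁴ < 0`, independent of `ε`;
hence `f^ε` is not convex on any open set containing such a point, for any `ε > 0`. -/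
theorem stmt_3 (ε : ℝ) (hε : 0 < ε)
    (fε : (Fin 2 → ℝ) → ℝ)
    (hfε : ∀ x, fε x = (x 0) ^ 4 + (x 1) ^ 4
      - (2 * (x 0) ^ 3 + 2 * (x 1) ^ 3) * (x 0 + x 1) + (1 / ε) * (x 0 + x 1) ^ 2)
    (H : (Fin 2 → ℝ) → Matrix (Fin 2) (Fin 2) ℝ)
    (hH : ∀ x, H x =
      !![-12 * (x 0) ^ 2 - 12 * (x 0) * (x 1) + 2 / ε, -6 * (x 0) ^ 2 - 6 * (x 1) ^ 2 + 2 / ε;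
         -6 * (x 0) ^ 2 - 6 * (x 1) ^ 2 + 2 / ε, -12 * (x 1) ^ 2 - 12 * (x 0) * (x 1) + 2 / ε])
    (x : Fin 2 → ℝ) (hx0 : x 0 = 0) (hx1 : x 1 ≠ 0) :
    (H x).det = -36 * (x 1) ^ 4 ∧ (H x).det < 0 ∧
      ∀ s : Set (Fin 2 → ℝ), IsOpen s → x ∈ s → ¬ ConvexOn ℝ s fε := by
  obtain rfl : fε = penalty ε := funext hfε
  have hdet : (H x).det = -36 * x 1 ^ 4 := by
    rw [hH, Matrix.det_fin_two_of, hx0]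
    ring
  have hx : x = ![0, x 1] := by
    ext i
    fin_cases i <;> simp [hx0]
  refine ⟨hdet, hdet ▸ mul_neg_of_neg_of_pos (by norm_num) (by positivity), fun s hs hxs => ?_⟩
  rw [hx] at hxs
  exact not_convexOn_penalty hε hx1 (hs.mem_nhds hxs)
end

section
/- If x satisfies Ax = b, then the gradient of the penalty function satisfies A∇f^ε(x) = 0; consequently, starting from y with Ay = b, the gradient step x⁺ = y − α∇f^ε(y) satisfies Ax⁺ = b for any stepsize α and any ε > 0. -/
open Matrix

/-- If `Ax = b` then `A ∇f^ε(x) = 0` (with `∇f^ε` given by the penalty gradient formula);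
consequently a gradient step from a feasible `y` stays feasible: `A(y − α∇f^ε(y)) = b`. -/
theorem stmt_6 (p n : ℕ) (A : Matrix (Fin p) (Fin n) ℝ) (hA : A.rank = p)
    (b : Fin p → ℝ) (ε : ℝ) (hε : 0 < ε)
    (g : (Fin n → ℝ) → (Fin n → ℝ))
    (H : (Fin n → ℝ) → Matrix (Fin n) (Fin n) ℝ)
    (gradPen : (Fin n → ℝ) → (Fin n → ℝ))
    (hgrad : ∀ z, gradPen z = g z - (H z * Aᵀ * (A * Aᵀ)⁻¹).mulVec (A.mulVec z - b)
      - (Aᵀ * (A * Aᵀ)⁻¹ * A).mulVec (g z)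
      + (2 / ε) • Aᵀ.mulVec (A.mulVec z - b))
    (x : Fin n → ℝ) (hx : A.mulVec x = b)
    (α : ℝ) (y : Fin n → ℝ) (hy : A.mulVec y = b) :
    A.mulVec (gradPen x) = 0 ∧ A.mulVec (y - α • gradPen y) = b := by
  -- A * Aᵀ is invertible
  have hrank : (A * Aᵀ).rank = Fintype.card (Fin p) := by
    rw [Matrix.rank_self_mul_transpose, hA, Fintype.card_fin]
  have hsurj : Function.Surjective (A * Aᵀ).mulVecLin := by
    rw [← LinearMap.range_eq_top]
    apply Submodule.eq_top_of_finrank_eq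
    rw [← Matrix.rank, hrank, Module.finrank_pi]
  have hU : IsUnit (A * Aᵀ) := Matrix.mulVec_surjective_iff_isUnit.mp hsurj
  have hdet : IsUnit (A * Aᵀ).det := (Matrix.isUnit_iff_isUnit_det _).mp hU
  have main : ∀ z, A.mulVec z = b → A.mulVec (gradPen z) = 0 := by
    intro z hz
    rw [hgrad z, hz, sub_self]
    simp only [Matrix.mulVec_zero, smul_zero, sub_zero, add_zero]
    rw [Matrix.mulVec_sub]
    simp only [Matrix.mulVec_mulVec, ← Matrix.mul_assoc]
    rw [Matrix.mul_nonsing_inv _ hdet, Matrix.one_mul, sub_self]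
  refine ⟨main x hx, ?_⟩
  rw [Matrix.mulVec_sub, hy, Matrix.mulVec_smul, main y hy, smul_zero, sub_zero]
end

section
/- If the objective is quadratic f(x) = ½xᵀQx + hᵀx with Q ≻ 0, then for every ε ∈ (0, ε̄] with ε̄ = 2λ_min(AAᵀ)λ_min(Q) / (λ_max(Q)² + 2λ_min(Q)λ_max(Q) − λ_min(Q)²), the matrix Q + (2/ε)AᵀA − QAᵀ(AAᵀ)⁻¹A − Aᵀ(AAᵀ)⁻¹AQ is positive semidefinite, so the penalty function f^ε is convex on ℝⁿ. -/
/-!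
Let `P = Aᵀ(AAᵀ)⁻¹A` be the orthogonal projection onto the row space of `A`. The penalty Hessian
splits as `(1 - P)ᵀ Q (1 - P) + G ((2/ε)(AAᵀ)² - AQAᵀ) Gᵀ` with `G = Aᵀ(AAᵀ)⁻¹`. The first summand
is positive semidefinite because `Q` is, and so is the middle factor of the second, since in the
Loewner order `AQAᵀ ≤ λmax(Q) AAᵀ ≤ (2/ε) λmin(AAᵀ) AAᵀ ≤ (2/ε) (AAᵀ)²`; the middle step is
`ε λmax(Q) ≤ 2 λmin(AAᵀ)`, which the bound on `ε` implies. The penalty function is half the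
quadratic form of its Hessian plus an affine function, hence convex.
-/

open Matrix Set
open scoped MatrixOrder

lemma le_two_div_mul_of_le_threshold {a μ ν ε : ℝ} (hμ : 0 < μ) (hμν : μ ≤ ν) (hε : 0 < ε)
    (h : ε ≤ 2 * a * μ / (ν ^ 2 + 2 * μ * ν - μ ^ 2)) : ν ≤ 2 / ε * a := by
  have hd : μ * ν ≤ ν ^ 2 + 2 * μ * ν - μ ^ 2 := by nlinarith
  have hεd : ε * (ν ^ 2 + 2 * μ * ν - μ ^ 2) ≤ 2 * a * μ := (le_div_iff₀ (by nlinarith)).1 h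
  have : ε * ν * μ ≤ 2 * a * μ := by nlinarith [mul_le_mul_of_nonneg_left hd hε.le]
  rw [div_mul_eq_mul_div, le_div_iff₀ hε]
  nlinarith [le_of_mul_le_mul_right this hμ]

namespace Matrix

variable {m n : Type*} [Fintype m] [Fintype n]

lemma isUnit_of_rank_eq_card [DecidableEq m] {K : Type*} [Field K] {S : Matrix m m K}
    (h : S.rank = Fintype.card m) : IsUnit S := by
  rw [← mulVec_surjective_iff_isUnit]
  refine LinearMap.range_eq_top.mp
    (Submodule.eq_top_of_finrank_eq (S := LinearMap.range S.mulVecLin) ?_)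
  rw [Module.finrank_fintype_fun_eq_card, ← h]
  rfl

lemma mulVec_dotProduct (N : Matrix m n ℝ) (y : n → ℝ) (z : m → ℝ) :
    (N *ᵥ y) ⬝ᵥ z = y ⬝ᵥ Nᵀ *ᵥ z := by
  rw [dotProduct_comm, dotProduct_transpose_mulVec]

section Spectral

variable [DecidableEq n] {C : Matrix n n ℝ}

lemma IsHermitian.posSemidef_cfc (hC : C.IsHermitian) {f : ℝ → ℝ}
    (hf : ∀ i, 0 ≤ f (hC.eigenvalues i)) : (cfc f C).PosSemidef := by
  refine (cfc_nonneg fun x hx => ?_).posSemidef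
  obtain ⟨i, rfl⟩ := hC.spectrum_real_eq_range_eigenvalues ▸ hx
  exact hf i

lemma IsHermitian.posSemidef_smul_one_sub (hC : C.IsHermitian) {c : ℝ}
    (h : ∀ i, hC.eigenvalues i ≤ c) : (c • 1 - C).PosSemidef := by
  have := hC.posSemidef_cfc (f := fun x => c - x) fun i => sub_nonneg.2 (h i)
  rwa [cfc_sub .., cfc_id' .., cfc_const .., Algebra.algebraMap_eq_smul_one] at this

lemma PosSemidef.mul_self_sub_smul (hC : C.PosSemidef) {c : ℝ}
    (h : ∀ i, c ≤ hC.1.eigenvalues i) : (C * C - c • C).PosSemidef := by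
  have := hC.1.posSemidef_cfc (f := fun x => x * (x - c))
    fun i => mul_nonneg (hC.eigenvalues_nonneg i) (sub_nonneg.2 (h i))
  rwa [cfc_mul .., cfc_sub .., cfc_id' .., cfc_const .., Algebra.algebraMap_eq_smul_one, mul_sub,
    Matrix.mul_smul, mul_one] at this

end Spectral

lemma convexOn_dotProduct_mulVec_self {M : Matrix n n ℝ} (hM : M.PosSemidef) :
    ConvexOn ℝ univ fun x => x ⬝ᵥ M *ᵥ x := by
  refine ⟨convex_univ, fun x _ y _ a b ha hb hab => ?_⟩
  have hxy : 0 ≤ (x - y) ⬝ᵥ M *ᵥ (x - y) := by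
    simpa only [star_trivial] using hM.dotProduct_mulVec_nonneg (x - y)
  have gap : a • (x ⬝ᵥ M *ᵥ x) + b • (y ⬝ᵥ M *ᵥ y) - (a • x + b • y) ⬝ᵥ M *ᵥ (a • x + b • y)
      = a * b * ((x - y) ⬝ᵥ M *ᵥ (x - y)) := by
    obtain rfl : b = 1 - a := by linarith
    simp only [mulVec_add, mulVec_sub, mulVec_smul, dotProduct_add, dotProduct_sub, add_dotProduct,
      sub_dotProduct, dotProduct_smul, smul_dotProduct, smul_eq_mul]
    ring
  linarith [mul_nonneg (mul_nonneg ha hb) hxy]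

lemma convexOn_half_dotProduct_mulVec_self_add_affine {M : Matrix n n ℝ} (hM : M.PosSemidef)
    (ℓ : n → ℝ) (c : ℝ) : ConvexOn ℝ univ fun x => 1 / 2 * (x ⬝ᵥ M *ᵥ x) + ℓ ⬝ᵥ x + c :=
  (((convexOn_dotProduct_mulVec_self hM).smul (by norm_num : (0 : ℝ) ≤ 1 / 2)).add
    ((dotProductBilin ℝ ℝ ℓ).convexOn convex_univ)).add_const c

lemma posSemidef_smul_mul_self_sub_mul_mul_transpose [DecidableEq n] (A : Matrix m n ℝ)
    {Q : Matrix n n ℝ} {a c μ : ℝ}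
    (hQ : (μ • 1 - Q).PosSemidef) (hS : (A * Aᵀ * (A * Aᵀ) - a • (A * Aᵀ)).PosSemidef)
    (hc : 0 ≤ c) (hμ : μ ≤ c * a) :
    (c • (A * Aᵀ * (A * Aᵀ)) - A * Q * Aᵀ).PosSemidef := by
  have split : c • (A * Aᵀ * (A * Aᵀ)) - A * Q * Aᵀ
      = A * (μ • 1 - Q) * Aᴴ + (c * a - μ) • (A * Aᴴ) + c • (A * Aᵀ * (A * Aᵀ) - a • (A * Aᵀ)) := by
    simp only [conjTranspose_eq_transpose_of_trivial, Matrix.mul_sub, Matrix.sub_mul,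
      Matrix.mul_smul, Matrix.smul_mul, Matrix.mul_one, smul_sub, sub_smul, mul_smul]
    abel
  rw [split]
  exact ((hQ.mul_mul_conjTranspose_same A).add
    ((posSemidef_self_mul_conjTranspose A).smul (sub_nonneg.2 hμ))).add (hS.smul hc)

section Penalty

variable [DecidableEq m] (A : Matrix m n ℝ)

lemma transpose_inv_mul_transpose_self : ((A * Aᵀ)⁻¹)ᵀ = (A * Aᵀ)⁻¹ := by
  rw [transpose_nonsing_inv, transpose_mul, transpose_transpose]

lemma penaltyHessian_eq [DecidableEq n] (hA : IsUnit (A * Aᵀ).det) (Q : Matrix n n ℝ) (c : ℝ) :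
    Q + c • (Aᵀ * A) - Q * (Aᵀ * (A * Aᵀ)⁻¹ * A) - (Aᵀ * (A * Aᵀ)⁻¹ * A) * Q
      = (1 - Aᵀ * (A * Aᵀ)⁻¹ * A)ᴴ * Q * (1 - Aᵀ * (A * Aᵀ)⁻¹ * A)
        + (Aᵀ * (A * Aᵀ)⁻¹) * (c • (A * Aᵀ * (A * Aᵀ)) - A * Q * Aᵀ) * (Aᵀ * (A * Aᵀ)⁻¹)ᴴ := by
  set S := A * Aᵀ
  set P := Aᵀ * S⁻¹ * A
  have hPT : Pᴴ = P := by
    rw [conjTranspose_eq_transpose_of_trivial, transpose_mul, transpose_mul, transpose_transpose,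
      transpose_inv_mul_transpose_self, ← Matrix.mul_assoc]
  have hGT : (Aᵀ * S⁻¹)ᴴ = S⁻¹ * A := by
    rw [conjTranspose_eq_transpose_of_trivial, transpose_mul, transpose_transpose,
      transpose_inv_mul_transpose_self]
  have hSS : Aᵀ * S⁻¹ * (S * S) * (S⁻¹ * A) = Aᵀ * A := by
    simp only [Matrix.mul_assoc, nonsing_inv_mul_cancel_left _ _ hA]
    rw [← Matrix.mul_assoc S, mul_nonsing_inv _ hA, Matrix.one_mul]
  have hSQS : Aᵀ * S⁻¹ * (A * Q * Aᵀ) * (S⁻¹ * A) = P * Q * P := by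
    simp only [P, Matrix.mul_assoc]
  rw [conjTranspose_sub, conjTranspose_one, hPT, hGT, Matrix.mul_sub (Aᵀ * S⁻¹),
    Matrix.sub_mul _ _ (S⁻¹ * A), Matrix.mul_smul, Matrix.smul_mul, hSS, hSQS]
  simp only [Matrix.sub_mul, Matrix.mul_sub, Matrix.one_mul, Matrix.mul_one]
  abel

lemma posSemidef_penaltyHessian (hA : IsUnit (A * Aᵀ).det) {Q : Matrix n n ℝ}
    (hQ : Q.PosSemidef) {c : ℝ} (hc : (c • (A * Aᵀ * (A * Aᵀ)) - A * Q * Aᵀ).PosSemidef) :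
    (Q + c • (Aᵀ * A) - Q * (Aᵀ * (A * Aᵀ)⁻¹ * A) - (Aᵀ * (A * Aᵀ)⁻¹ * A) * Q).PosSemidef := by
  classical
  rw [penaltyHessian_eq A hA]
  exact (hQ.conjTranspose_mul_mul_same _).add (hc.mul_mul_conjTranspose_same _)

lemma exists_penalty_eq_quadratic_add_affine {Q : Matrix n n ℝ} (hQ : Qᵀ = Q)
    (h : n → ℝ) (b : m → ℝ) (ε : ℝ) :
    ∃ (ℓ : n → ℝ) (c : ℝ), ∀ x, (1 / 2) * (x ⬝ᵥ Q *ᵥ x) + h ⬝ᵥ x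
      - (((A * Aᵀ)⁻¹ * A) *ᵥ (Q *ᵥ x + h)) ⬝ᵥ (A *ᵥ x - b)
      + (1 / ε) * ((A *ᵥ x - b) ⬝ᵥ (A *ᵥ x - b))
      = (1 / 2) * (x ⬝ᵥ (Q + (2 / ε) • (Aᵀ * A) - Q * (Aᵀ * (A * Aᵀ)⁻¹ * A)
          - (Aᵀ * (A * Aᵀ)⁻¹ * A) * Q) *ᵥ x) + ℓ ⬝ᵥ x + c := by
  set G := (A * Aᵀ)⁻¹ * A
  set P := Aᵀ * (A * Aᵀ)⁻¹ * A
  have hGA : ∀ y, Gᵀ *ᵥ A *ᵥ y = P *ᵥ y := fun y => by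
    rw [mulVec_mulVec, transpose_mul, transpose_inv_mul_transpose_self]
  have hPT : Pᵀ = P := by
    rw [transpose_mul, transpose_mul, transpose_transpose, transpose_inv_mul_transpose_self,
      ← Matrix.mul_assoc]
  have hPQ : ∀ x, x ⬝ᵥ P *ᵥ Q *ᵥ x = x ⬝ᵥ Q *ᵥ P *ᵥ x := fun x => by
    calc x ⬝ᵥ P *ᵥ Q *ᵥ x = (P *ᵥ x) ⬝ᵥ Q *ᵥ x := by rw [mulVec_dotProduct, hPT]
      _ = x ⬝ᵥ Q *ᵥ P *ᵥ x := by rw [dotProduct_comm, mulVec_dotProduct, hQ]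
  refine ⟨h - P *ᵥ h + (G * Q)ᵀ *ᵥ b - (2 / ε) • (Aᵀ *ᵥ b),
    (G *ᵥ h) ⬝ᵥ b + (1 / ε) * (b ⬝ᵥ b), fun x => ?_⟩
  simp only [mulVec_add, add_mulVec, sub_mulVec, smul_mulVec, ← mulVec_mulVec,
    dotProduct_add, dotProduct_sub, add_dotProduct, sub_dotProduct, dotProduct_smul,
    smul_dotProduct, smul_eq_mul, mulVec_dotProduct, transpose_transpose, hQ, hGA, hPT]
  rw [← dotProduct_transpose_mulVec G, mulVec_dotProduct, hQ, dotProduct_transpose_mulVec A x b,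
    hPQ]
  ring

end Penalty

end Matrix

theorem stmt_10_general (p n : ℕ) [NeZero n]
    (A : Matrix (Fin p) (Fin n) ℝ) (hA : A.rank = p)
    (hAAT : (A * Aᵀ).IsHermitian)
    (b : Fin p → ℝ) (Q : Matrix (Fin n) (Fin n) ℝ) (hQ : Q.PosDef)
    (h : Fin n → ℝ) (ε : ℝ) (hε : 0 < ε)
    (hεle : ε ≤ 2 * (⨅ i, hAAT.eigenvalues i) * (⨅ i, hQ.1.eigenvalues i) /
      ((⨆ i, hQ.1.eigenvalues i) ^ 2
        + 2 * (⨅ i, hQ.1.eigenvalues i) * (⨆ i, hQ.1.eigenvalues i)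
        - (⨅ i, hQ.1.eigenvalues i) ^ 2))
    (fε : (Fin n → ℝ) → ℝ)
    (hfε : ∀ x, fε x = (1 / 2) * (x ⬝ᵥ Q.mulVec x) + h ⬝ᵥ x
      - (((A * Aᵀ)⁻¹ * A).mulVec (Q.mulVec x + h)) ⬝ᵥ (A.mulVec x - b)
      + (1 / ε) * ((A.mulVec x - b) ⬝ᵥ (A.mulVec x - b))) :
    (Q + (2 / ε) • (Aᵀ * A) - Q * (Aᵀ * (A * Aᵀ)⁻¹ * A)
      - (Aᵀ * (A * Aᵀ)⁻¹ * A) * Q).PosSemidef ∧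
    ConvexOn ℝ Set.univ fε := by
  have hS : IsUnit (A * Aᵀ).det := (isUnit_iff_isUnit_det _).mp <|
    isUnit_of_rank_eq_card <| by rw [rank_self_mul_transpose, hA, Fintype.card_fin]
  have hSpsd : (A * Aᵀ).PosSemidef := by
    simpa only [conjTranspose_eq_transpose_of_trivial] using posSemidef_self_mul_conjTranspose A
  have hQmin_pos : 0 < ⨅ i, hQ.1.eigenvalues i := by
    obtain ⟨i, hi⟩ := exists_eq_ciInf_of_finite (f := hQ.1.eigenvalues)
    exact hi ▸ hQ.eigenvalues_pos i
  have hQmax : ((⨆ i, hQ.1.eigenvalues i) • 1 - Q).PosSemidef :=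
    hQ.1.posSemidef_smul_one_sub fun i => le_ciSup (finite_range _).bddAbove i
  have hSmin : (A * Aᵀ * (A * Aᵀ) - (⨅ i, hAAT.eigenvalues i) • (A * Aᵀ)).PosSemidef :=
    hSpsd.mul_self_sub_smul fun i => ciInf_le (finite_range _).bddBelow i
  have hεbound := le_two_div_mul_of_le_threshold hQmin_pos
    (ciInf_le_ciSup (finite_range _).bddBelow (finite_range _).bddAbove) hε hεle
  have hM := posSemidef_penaltyHessian A hS hQ.posSemidef <|
    posSemidef_smul_mul_self_sub_mul_mul_transpose A hQmax hSmin (by positivity) hεbound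
  refine ⟨hM, ?_⟩
  obtain ⟨ℓ, c, hf⟩ := exists_penalty_eq_quadratic_add_affine A (isHermitian_iff_isSymm.mp hQ.1) h b ε
  rw [show fε = _ from funext fun x => (hfε x).trans (hf x)]
  exact convexOn_half_dotProduct_mulVec_self_add_affine hM ℓ c

/-- For a quadratic objective `f(x) = ½xᵀQx + hᵀx` with `Q ≻ 0`, for every
`ε ∈ (0, ε̄]` with `ε̄ = 2λmin(AAᵀ)λmin(Q) / (λmax(Q)² + 2λmin(Q)λmax(Q) − λmin(Q)²)`,
the penalty Hessian `Q + (2/ε)AᵀA − QAᵀ(AAᵀ)⁻¹A − Aᵀ(AAᵀ)⁻¹AQ` is positive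
semidefinite, so the penalty function `f^ε` is convex on `ℝⁿ`. -/
theorem stmt_10 (p n : ℕ) [NeZero p] [NeZero n]
    (A : Matrix (Fin p) (Fin n) ℝ) (hA : A.rank = p)
    (hAAT : (A * Aᵀ).IsHermitian)
    (b : Fin p → ℝ) (Q : Matrix (Fin n) (Fin n) ℝ) (hQ : Q.PosDef)
    (h : Fin n → ℝ) (ε : ℝ) (hε : 0 < ε)
    (hεle : ε ≤ 2 * (⨅ i, hAAT.eigenvalues i) * (⨅ i, hQ.1.eigenvalues i) /
      ((⨆ i, hQ.1.eigenvalues i) ^ 2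
        + 2 * (⨅ i, hQ.1.eigenvalues i) * (⨆ i, hQ.1.eigenvalues i)
        - (⨅ i, hQ.1.eigenvalues i) ^ 2))
    (fε : (Fin n → ℝ) → ℝ)
    (hfε : ∀ x, fε x = (1 / 2) * (x ⬝ᵥ Q.mulVec x) + h ⬝ᵥ x
      - (((A * Aᵀ)⁻¹ * A).mulVec (Q.mulVec x + h)) ⬝ᵥ (A.mulVec x - b)
      + (1 / ε) * ((A.mulVec x - b) ⬝ᵥ (A.mulVec x - b))) :
    (Q + (2 / ε) • (Aᵀ * A) - Q * (Aᵀ * (A * Aᵀ)⁻¹ * A)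
      - (Aᵀ * (A * Aᵀ)⁻¹ * A) * Q).PosSemidef ∧
    ConvexOn ℝ Set.univ fε :=
  stmt_10_general p n A hA hAAT b Q hQ h ε hε hεle fε hfε
end
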